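/- Let r ≥ 1 and let z = (z₀⁽¹⁾, z₁⁽¹⁾, z₂⁽¹⁾, z₀⁽²⁾) ∈ Mat(2r × 4r, ℂ) be written in blocks in Mat(2r × r, ℂ), and assume det(z₀⁽¹⁾ | z₁⁽¹⁾) ≠ 0 and det(z₀⁽¹⁾ | z₀⁽²⁾) ≠ 0. Then there exist g ∈ GL(2r, ℂ), h ∈ H_{(3,1)}, and x ∈ Mat(r×r, ℂ) such that g · z · h is the 2r×4r matrix with block rows (1_r, 0, 0, 0) and (0, 1_r, x, 1_r). -/

import Mathlib

open Matrix

/-- The `2r × nr` matrix assembled from `n` block columns of size `2r × r`. -/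
def ofBlockCols (r n : ℕ) (z : Fin n → Matrix (Fin r ⊕ Fin r) (Fin r) ℂ) :
    Matrix (Fin r ⊕ Fin r) (Fin n × Fin r) ℂ :=
  Matrix.of fun i jk => z jk.1 i jk.2

/-- The `nr × nr` matrix assembled from an `n × n` array of `r × r` blocks. -/
def ofBlockMat (r n : ℕ) (H : Fin n → Fin n → Matrix (Fin r) (Fin r) ℂ) :
    Matrix (Fin n × Fin r) (Fin n × Fin r) ℂ :=
  Matrix.of fun jk lk => H jk.1 lk.1 jk.2 lk.2

/-!
Put `A = (z₀ | z₃)`. The left factor `A⁻¹` turns `z₀, z₃` into the block columns `(1; 0)` and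
`(0; 1)`, and `z₁` into some `(a; b)` with `det b = det (z₀ | z₁) / det A ≠ 0`; composing with
`diag(1, b⁻¹)` makes the images of `z₀, z₁, z₃` equal to `(1; 0), (a; 1), (0; b⁻¹)`. If `(p; q)` is
the image of `z₂`, the element of `H_{(3,1)}` with `h₀ = 1`, `h₁ = -a`, `h₂ = a² - p`, `k = b`
clears the remaining upper blocks and leaves `x = q - a`.
-/

lemma fromRows_add {R m₁ m₂ n : Type*} [Add R] (A₁ B₁ : Matrix m₁ n R) (A₂ B₂ : Matrix m₂ n R) :
    fromRows A₁ A₂ + fromRows B₁ B₂ = fromRows (A₁ + B₁) (A₂ + B₂) := by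
  ext (i | i) j <;> rfl

section GLNormalization

variable {K : Type*} [Field K] {m n : Type*} [Fintype m] [Fintype n] [DecidableEq m]
  [DecidableEq n]

lemma exists_GL_mul_eq_fromRows_of_det_fromCols_ne_zero (u : Matrix (m ⊕ n) m K)
    (v : Matrix (m ⊕ n) n K) (h : (fromCols u v).det ≠ 0) :
    ∃ g : GL (m ⊕ n) K, (g : Matrix (m ⊕ n) (m ⊕ n) K) * u = fromRows 1 0 ∧
      (g : Matrix (m ⊕ n) (m ⊕ n) K) * v = fromRows 0 1 := by
  refine ⟨(GeneralLinearGroup.mkOfDetNeZero _ h)⁻¹, fromCols_inj ?_⟩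
  rw [← mul_fromCols, fromCols_fromRows_eq_fromBlocks, fromBlocks_one]
  exact congrArg Units.val (inv_mul_cancel (GeneralLinearGroup.mkOfDetNeZero _ h))

lemma det_toRows₂_mul_ne_zero_of_mul_eq_fromRows {G : Matrix (m ⊕ n) (m ⊕ n) K}
    {u : Matrix (m ⊕ n) m K} {w : Matrix (m ⊕ n) n K} (hG : G.det ≠ 0)
    (hu : G * u = fromRows 1 0) (h : (fromCols u w).det ≠ 0) :
    (toRows₂ (G * w)).det ≠ 0 := by
  have hblocks : G * fromCols u w = fromBlocks 1 (toRows₁ (G * w)) 0 (toRows₂ (G * w)) := by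
    rw [mul_fromCols, hu, ← fromCols_fromRows_eq_fromBlocks, fromRows_toRows]
  have hdet := congrArg det hblocks
  rw [det_mul, det_fromBlocks_zero₂₁, det_one, one_mul] at hdet
  rw [← hdet]
  exact mul_ne_zero hG h

lemma exists_GL_mul_eq_fromRows_of_two_det_fromCols_ne_zero (u : Matrix (m ⊕ n) m K)
    (v w : Matrix (m ⊕ n) n K) (huv : (fromCols u v).det ≠ 0) (huw : (fromCols u w).det ≠ 0) :
    ∃ (g : GL (m ⊕ n) K) (a : Matrix m n K) (c : GL n K),
      (g : Matrix (m ⊕ n) (m ⊕ n) K) * u = fromRows 1 0 ∧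
      (g : Matrix (m ⊕ n) (m ⊕ n) K) * w = fromRows a 1 ∧
      (g : Matrix (m ⊕ n) (m ⊕ n) K) * v = fromRows 0 ↑c⁻¹ := by
  obtain ⟨g, hu, hv⟩ := exists_GL_mul_eq_fromRows_of_det_fromCols_ne_zero u v huv
  have hw := (fromRows_toRows ((g : Matrix (m ⊕ n) (m ⊕ n) K) * w)).symm
  set a := toRows₁ ((g : Matrix (m ⊕ n) (m ⊕ n) K) * w)
  set b := toRows₂ ((g : Matrix (m ⊕ n) (m ⊕ n) K) * w)
  let c := GeneralLinearGroup.mkOfDetNeZero b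
    (det_toRows₂_mul_ne_zero_of_mul_eq_fromRows g.det_ne_zero hu huw)
  have hc : b = c := (GeneralLinearGroup.val_mkOfDetNeZero _ _).symm
  let d := GeneralLinearGroup.mkOfDetNeZero
    (fromBlocks (1 : Matrix m m K) 0 0 ((c⁻¹ : GL n K) : Matrix n n K))
    (by rw [det_fromBlocks_zero₂₁, det_one, one_mul]; exact c⁻¹.det_ne_zero)
  refine ⟨d * g, a, c, ?_, ?_, ?_⟩ <;>
    simp only [Units.val_mul, Matrix.mul_assoc, hu, hv, hw, hc, d,
      GeneralLinearGroup.val_mkOfDetNeZero, fromBlocks_mul_fromRows] <;> simp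

end GLNormalization

section BlockColumns

variable {r n : ℕ}

lemma mul_ofBlockCols (M : Matrix (Fin r ⊕ Fin r) (Fin r ⊕ Fin r) ℂ)
    (z : Fin n → Matrix (Fin r ⊕ Fin r) (Fin r) ℂ) :
    M * ofBlockCols r n z = ofBlockCols r n (fun j => M * z j) := by
  ext i ⟨j, k⟩
  simp [ofBlockCols, Matrix.mul_apply]

lemma ofBlockCols_mul_ofBlockMat (z : Fin n → Matrix (Fin r ⊕ Fin r) (Fin r) ℂ)
    (H : Fin n → Fin n → Matrix (Fin r) (Fin r) ℂ) :
    ofBlockCols r n z * ofBlockMat r n H = ofBlockCols r n (fun l => ∑ j, z j * H j l) := by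
  ext i ⟨l, k⟩
  simp [ofBlockCols, ofBlockMat, Matrix.mul_apply, Fintype.sum_prod_type, Matrix.sum_apply]

lemma ofBlockCols_mul_ofBlockMat_jordan_three_one
    (w : Fin 4 → Matrix (Fin r ⊕ Fin r) (Fin r) ℂ) (h₀ h₁ h₂ k : Matrix (Fin r) (Fin r) ℂ) :
    ofBlockCols r 4 w * ofBlockMat r 4
        ![![h₀, h₁, h₂, 0], ![0, h₀, h₁, 0], ![0, 0, h₀, 0], ![0, 0, 0, k]] =
      ofBlockCols r 4
        ![w 0 * h₀, w 0 * h₁ + w 1 * h₀, w 0 * h₂ + w 1 * h₁ + w 2 * h₀, w 3 * k] := by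
  rw [ofBlockCols_mul_ofBlockMat]
  congr 1
  funext l
  fin_cases l <;> simp [Fin.sum_univ_four]

lemma ofBlockCols_mul_ofBlockMat_eq_normalForm (a p q : Matrix (Fin r) (Fin r) ℂ)
    (c : GL (Fin r) ℂ) :
    ofBlockCols r 4 ![fromRows 1 0, fromRows a 1, fromRows p q, fromRows 0 ↑c⁻¹] *
        ofBlockMat r 4
          ![![1, -a, a * a - p, 0], ![0, 1, -a, 0], ![0, 0, 1, 0], ![0, 0, 0, ↑c]] =
      ofBlockCols r 4 ![fromRows 1 0, fromRows 0 1, fromRows 0 (q - a), fromRows 0 1] := by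
  rw [ofBlockCols_mul_ofBlockMat_jordan_three_one]
  congr 1
  funext l
  fin_cases l <;> simp [fromRows_mul, fromRows_add]
  exact congrArg₂ fromRows (by abel) (by abel)

end BlockColumns

theorem normal_form_partition_31_first_general (r : ℕ)
    (z : Fin 4 → Matrix (Fin r ⊕ Fin r) (Fin r) ℂ)
    (h01 : (fromCols (z 0) (z 1)).det ≠ 0)
    (h03 : (fromCols (z 0) (z 3)).det ≠ 0) :
    ∃ (g : GL (Fin r ⊕ Fin r) ℂ) (h₀ k : GL (Fin r) ℂ)
      (h₁ h₂ : Matrix (Fin r) (Fin r) ℂ) (x : Matrix (Fin r) (Fin r) ℂ),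
      (g : Matrix (Fin r ⊕ Fin r) (Fin r ⊕ Fin r) ℂ) * ofBlockCols r 4 z *
          ofBlockMat r 4
            ![![(h₀ : Matrix (Fin r) (Fin r) ℂ), h₁, h₂, 0],
              ![0, (h₀ : Matrix (Fin r) (Fin r) ℂ), h₁, 0],
              ![0, 0, (h₀ : Matrix (Fin r) (Fin r) ℂ), 0],
              ![0, 0, 0, (k : Matrix (Fin r) (Fin r) ℂ)]] =
        ofBlockCols r 4
          ![fromRows 1 0, fromRows 0 1, fromRows 0 x, fromRows 0 1] := by
  obtain ⟨g, a, c, hg0, hg1, hg3⟩ :=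
    exists_GL_mul_eq_fromRows_of_two_det_fromCols_ne_zero (z 0) (z 3) (z 1) h03 h01
  set p := toRows₁ ((g : Matrix (Fin r ⊕ Fin r) (Fin r ⊕ Fin r) ℂ) * z 2)
  set q := toRows₂ ((g : Matrix (Fin r ⊕ Fin r) (Fin r ⊕ Fin r) ℂ) * z 2)
  have hgz : (fun j => (g : Matrix (Fin r ⊕ Fin r) (Fin r ⊕ Fin r) ℂ) * z j) =
      ![fromRows 1 0, fromRows a 1, fromRows p q, fromRows 0 ↑c⁻¹] := by
    funext j
    fin_cases j
    exacts [hg0, hg1, (fromRows_toRows _).symm, hg3]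
  refine ⟨g, 1, c, -a, a * a - p, q - a, ?_⟩
  rw [mul_ofBlockCols, hgz, Units.val_one]
  exact ofBlockCols_mul_ofBlockMat_eq_normalForm a p q c

/-- Normal form lemma (form `x₁`) for `(m, N) = (2r, 4r)`, partition `λ = (3,1)`:
`z = (z₀⁽¹⁾, z₁⁽¹⁾, z₂⁽¹⁾, z₀⁽²⁾)` with `det(z₀⁽¹⁾ | z₁⁽¹⁾) ≠ 0` and
`det(z₀⁽¹⁾ | z₀⁽²⁾) ≠ 0` can be brought, by the action of `GL(2r, ℂ) × H_{(3,1)}`,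
to the normal form with block rows `(1_r, 0, 0, 0)` and `(0, 1_r, x, 1_r)`. -/
theorem normal_form_partition_31_first (r : ℕ) (hr : 1 ≤ r)
    (z : Fin 4 → Matrix (Fin r ⊕ Fin r) (Fin r) ℂ)
    (h01 : (fromCols (z 0) (z 1)).det ≠ 0)
    (h03 : (fromCols (z 0) (z 3)).det ≠ 0) :
    ∃ (g : GL (Fin r ⊕ Fin r) ℂ) (h₀ k : GL (Fin r) ℂ)
      (h₁ h₂ : Matrix (Fin r) (Fin r) ℂ) (x : Matrix (Fin r) (Fin r) ℂ),
      (g : Matrix (Fin r ⊕ Fin r) (Fin r ⊕ Fin r) ℂ) * ofBlockCols r 4 z *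
          ofBlockMat r 4
            ![![(h₀ : Matrix (Fin r) (Fin r) ℂ), h₁, h₂, 0],
              ![0, (h₀ : Matrix (Fin r) (Fin r) ℂ), h₁, 0],
              ![0, 0, (h₀ : Matrix (Fin r) (Fin r) ℂ), 0],
              ![0, 0, 0, (k : Matrix (Fin r) (Fin r) ℂ)]] =
        ofBlockCols r 4
          ![fromRows 1 0, fromRows 0 1, fromRows 0 x, fromRows 0 1] :=
  normal_form_partition_31_first_general r z h01 h03
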